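/- The Harmony mechanism output has expectation equal to the input: for v ∈ [−1,1], E[Harmony(v)] = v. -/
import Mathlib

open Real

/-- Probability that the Harmony mechanism outputs `(e^ε+1)/(e^ε−1)` on input `v`. -/
noncomputable def harmonyPosProb (ε v : ℝ) : ℝ :=
  (1 + v) / 2 * (exp ε / (exp ε + 1)) + (1 - v) / 2 * (1 / (exp ε + 1))

/-- The Harmony mechanism is unbiased: `E[Harmony(v)] = v` for `v ∈ [−1,1]`. -/
theorem harmony_unbiased (ε v : ℝ) (hε : 0 < ε) (hv : v ∈ Set.Icc (-1 : ℝ) 1) :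
    (exp ε + 1) / (exp ε - 1) * harmonyPosProb ε v
      + (-((exp ε + 1) / (exp ε - 1))) * (1 - harmonyPosProb ε v) = v := by
  have h1 : exp ε - 1 ≠ 0 := by
    nlinarith [Real.add_one_lt_exp hε.ne']
  have h2 : exp ε + 1 ≠ 0 := by positivity
  unfold harmonyPosProb
  field_simp
  ring
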